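/- arXiv:1609.01917 — 5 statements merged into one kernel-verified Lean document; each statement's English description precedes it below -/
import Mathlib

section
/- Let R be an M×M positive semidefinite Hermitian matrix of rank r with R = U Λ Uᴴ (Λ diagonal r×r with positive entries, U with orthonormal columns), P a T×M complex matrix, σ² > 0, ε > 0, and define C_e(P) = U (Λ⁻¹ + (1/σ²) Uᴴ Pᴴ P U)⁻¹ Uᴴ. Then C_e(P) ⪯ ε I_M if and only if Uᴴ (Pᴴ P) U ⪰ σ² (ε⁻¹ I_r − Λ⁻¹). -/
open Matrix ComplexOrder

private lemma smulPSD {n : Type*} [Fintype n] {c : ℝ} (hc : 0 ≤ c)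
    {A : Matrix n n ℂ} (hA : A.PosSemidef) : ((c : ℂ) • A).PosSemidef := by
  constructor
  · have : Matrix.IsHermitian A := hA.1
    unfold Matrix.IsHermitian at this ⊢
    rw [conjTranspose_smul, this]
    congr 1
    simp [Complex.star_def, Complex.conj_ofReal]
  · intro x
    exact (hA.smul (Complex.zero_le_real.mpr hc)).2 x

private lemma smulPSD_iff {n : Type*} [Fintype n] {c : ℝ} (hc : 0 < c)
    (A : Matrix n n ℂ) : ((c : ℂ) • A).PosSemidef ↔ A.PosSemidef := by
  refine ⟨fun h => ?_, fun h => smulPSD hc.le h⟩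
  have := smulPSD (inv_nonneg.mpr hc.le) h
  rw [smul_smul] at this
  have hcc : ((c⁻¹ : ℝ) : ℂ) * (c : ℂ) = 1 := by
    push_cast
    field_simp
  rwa [hcc, one_smul] at this

/-- The estimation error constraint C_e(P) ⪯ ε I is equivalent to a PSD constraint on UᴴPᴴPU. -/
theorem stmt_1 (M T r : ℕ) (d : Fin r → ℝ) (hd : ∀ i, 0 < d i)
    (U : Matrix (Fin M) (Fin r) ℂ) (hU : Uᴴ * U = 1)
    (P : Matrix (Fin T) (Fin M) ℂ) (σ2 ε : ℝ) (hσ : 0 < σ2) (hε : 0 < ε)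
    (Λ : Matrix (Fin r) (Fin r) ℂ) (hΛ : Λ = Matrix.diagonal (fun i => (d i : ℂ)))
    (Ce : Matrix (Fin M) (Fin M) ℂ)
    (hCe : Ce = U * (Λ⁻¹ + ((σ2 : ℂ))⁻¹ • (Uᴴ * Pᴴ * P * U))⁻¹ * Uᴴ) :
    ((ε : ℂ) • (1 : Matrix (Fin M) (Fin M) ℂ) - Ce).PosSemidef ↔
      (Uᴴ * (Pᴴ * P) * U - (σ2 : ℂ) • (((ε : ℂ))⁻¹ • (1 : Matrix (Fin r) (Fin r) ℂ) - Λ⁻¹)).PosSemidef := by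
  -- setup
  set Q : Matrix (Fin r) (Fin r) ℂ := Uᴴ * Pᴴ * P * U with hQdef
  have hQ : Q.PosSemidef := by
    have := Matrix.posSemidef_conjTranspose_mul_self (P * U)
    rwa [conjTranspose_mul, show Uᴴ * Pᴴ * (P * U) = Uᴴ * Pᴴ * P * U by
      rw [← Matrix.mul_assoc]] at this
  have hΛinv : Λ⁻¹ = Matrix.diagonal (fun i => ((d i)⁻¹ : ℝ) : Fin r → ℂ) := by
    apply Matrix.inv_eq_right_inv
    have hone : (fun i => ((d i : ℝ) : ℂ) * (((d i)⁻¹ : ℝ) : ℂ)) =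
        (fun _ => (1 : ℂ)) := by
      funext i
      push_cast
      exact mul_inv_cancel₀ (by exact_mod_cast (hd i).ne')
    rw [hΛ, Matrix.diagonal_mul_diagonal, hone, Matrix.diagonal_one]
  have hΛinv_pd : (Λ⁻¹).PosDef := by
    rw [hΛinv]
    exact Matrix.posDef_diagonal_iff.mpr fun i =>
      Complex.zero_lt_real.mpr (inv_pos.mpr (hd i))
  set A : Matrix (Fin r) (Fin r) ℂ := Λ⁻¹ + ((σ2 : ℂ))⁻¹ • Q with hAdef
  have hsm : ((σ2 : ℂ))⁻¹ • Q = (((σ2⁻¹ : ℝ)) : ℂ) • Q := by push_cast; rfl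
  have hA_pd : A.PosDef := by
    rw [hAdef, hsm]
    exact hΛinv_pd.add_posSemidef (smulPSD (inv_nonneg.mpr hσ.le) hQ)
  have hA_h : A.IsHermitian := hA_pd.isHermitian
  have hA_det : IsUnit A.det := isUnit_iff_ne_zero.mpr hA_pd.det_pos.ne'
  have hAiA : A⁻¹ * A = 1 := Matrix.nonsing_inv_mul A hA_det
  have hAAi : A * A⁻¹ = 1 := Matrix.mul_nonsing_inv A hA_det
  have hAinv_pd : A⁻¹.PosDef := hA_pd.inv
  -- square root S of A
  set S : Matrix (Fin r) (Fin r) ℂ := (open scoped MatrixOrder in CFC.sqrt A) with hSdef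
  have hS_psd : S.PosSemidef := by open scoped MatrixOrder in exact (CFC.sqrt_nonneg A).posSemidef
  have hS_h : S.IsHermitian := hS_psd.1
  have hSS : S * S = A := by open scoped MatrixOrder in exact CFC.sqrt_mul_sqrt_self A hA_pd.posSemidef.nonneg
  have hS_det : IsUnit S.det := by
    have : S.det * S.det = A.det := by rw [← Matrix.det_mul, hSS]
    refine isUnit_iff_ne_zero.mpr fun h => ?_
    rw [h, mul_zero] at this
    exact hA_pd.det_pos.ne' this.symm
  have hSiS : S⁻¹ * S = 1 := Matrix.nonsing_inv_mul S hS_det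
  have hSSi : S * S⁻¹ = 1 := Matrix.mul_nonsing_inv S hS_det
  have hAinv : A⁻¹ = S⁻¹ * S⁻¹ := by rw [← hSS, Matrix.mul_inv_rev]
  have hSi_h : (S⁻¹).IsHermitian := hS_h.inv
  -- Step 1 : (ε•1 - Ce) PSD ↔ (ε•1_r - A⁻¹) PSD
  have step1 : ((ε : ℂ) • (1 : Matrix (Fin M) (Fin M) ℂ) - Ce).PosSemidef ↔
      ((ε : ℂ) • (1 : Matrix (Fin r) (Fin r) ℂ) - A⁻¹).PosSemidef := by
    constructor
    · intro h
      have h2 := h.conjTranspose_mul_mul_same U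
      have heq : Uᴴ * ((ε : ℂ) • (1 : Matrix (Fin M) (Fin M) ℂ) - Ce) * U =
          (ε : ℂ) • (1 : Matrix (Fin r) (Fin r) ℂ) - A⁻¹ := by
        rw [hCe]
        rw [Matrix.mul_sub, Matrix.sub_mul]
        congr 1
        · rw [Matrix.mul_smul, Matrix.smul_mul, Matrix.mul_one, hU]
        · calc Uᴴ * (U * A⁻¹ * Uᴴ) * U = (Uᴴ * U) * (A⁻¹ * (Uᴴ * U)) := by
                simp only [Matrix.mul_assoc]
             _ = A⁻¹ := by rw [hU, Matrix.one_mul, Matrix.mul_one]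
      rwa [heq] at h2
    · intro h
      have hproj : ((1 : Matrix (Fin M) (Fin M) ℂ) - U * Uᴴ).PosSemidef := by
        have hkey : ((1 : Matrix (Fin M) (Fin M) ℂ) - U * Uᴴ)ᴴ *
            ((1 : Matrix (Fin M) (Fin M) ℂ) - U * Uᴴ) =
            (1 : Matrix (Fin M) (Fin M) ℂ) - U * Uᴴ := by
          have hUU : U * Uᴴ * (U * Uᴴ) = U * Uᴴ := by
            calc U * Uᴴ * (U * Uᴴ) = U * ((Uᴴ * U) * Uᴴ) := by
                  simp only [Matrix.mul_assoc]
              _ = U * Uᴴ := by rw [hU, Matrix.one_mul]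
          rw [conjTranspose_sub, conjTranspose_one, conjTranspose_mul,
            conjTranspose_conjTranspose]
          rw [Matrix.sub_mul, Matrix.mul_sub, Matrix.mul_sub, Matrix.one_mul,
            Matrix.one_mul, Matrix.mul_one, hUU]
          abel
        rw [← hkey]
        exact Matrix.posSemidef_conjTranspose_mul_self _
      have h1 := smulPSD hε.le hproj
      have h2 := h.mul_mul_conjTranspose_same U
      have hsum := h1.add h2
      have heq : (ε : ℂ) • ((1 : Matrix (Fin M) (Fin M) ℂ) - U * Uᴴ) +
          U * ((ε : ℂ) • (1 : Matrix (Fin r) (Fin r) ℂ) - A⁻¹) * Uᴴ =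
          (ε : ℂ) • (1 : Matrix (Fin M) (Fin M) ℂ) - Ce := by
        rw [hCe]
        simp only [Matrix.mul_sub, Matrix.sub_mul, Matrix.mul_smul, Matrix.smul_mul,
          Matrix.mul_one, smul_sub]
        abel
      rwa [heq] at hsum
  -- Step 2 : (ε•1_r - A⁻¹) PSD ↔ (ε•A - 1) PSD
  have hSAiS : S * A⁻¹ * S = 1 := by
    rw [hAinv]
    calc S * (S⁻¹ * S⁻¹) * S = (S * S⁻¹) * (S⁻¹ * S) := by simp only [mul_assoc]
      _ = 1 := by rw [hSSi, hSiS, one_mul]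
  have hSiASi : S⁻¹ * A * S⁻¹ = 1 := by
    rw [← hSS]
    calc S⁻¹ * (S * S) * S⁻¹ = (S⁻¹ * S) * (S * S⁻¹) := by simp only [mul_assoc]
      _ = 1 := by rw [hSiS, hSSi, one_mul]
  have step2 : ((ε : ℂ) • (1 : Matrix (Fin r) (Fin r) ℂ) - A⁻¹).PosSemidef ↔
      ((ε : ℂ) • A - 1).PosSemidef := by
    constructor
    · intro h
      have h2 := h.mul_mul_conjTranspose_same S
      have heq : S * ((ε : ℂ) • (1 : Matrix (Fin r) (Fin r) ℂ) - A⁻¹) * Sᴴ =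
          (ε : ℂ) • A - 1 := by
        rw [hS_h.eq]
        simp only [Matrix.mul_sub, Matrix.sub_mul, Matrix.mul_smul, Matrix.smul_mul,
          Matrix.mul_one]
        rw [hSS, hSAiS]
      rwa [heq] at h2
    · intro h
      have h2 := h.mul_mul_conjTranspose_same S⁻¹
      have heq : S⁻¹ * ((ε : ℂ) • A - 1) * (S⁻¹)ᴴ =
          (ε : ℂ) • (1 : Matrix (Fin r) (Fin r) ℂ) - A⁻¹ := by
        rw [hSi_h.eq]
        simp only [Matrix.mul_sub, Matrix.sub_mul, Matrix.mul_smul, Matrix.smul_mul,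
          Matrix.mul_one]
        rw [hSiASi, ← hAinv]
      rwa [heq] at h2
  -- Step 3 : (ε•A - 1) PSD ↔ target PSD
  have hmat : Uᴴ * (Pᴴ * P) * U - (σ2 : ℂ) • (((ε : ℂ))⁻¹ • (1 : Matrix (Fin r) (Fin r) ℂ) - Λ⁻¹) =
      (((σ2 * ε⁻¹ : ℝ)) : ℂ) • ((ε : ℂ) • A - 1) := by
    have hQ' : Uᴴ * (Pᴴ * P) * U = Q := by rw [hQdef, ← Matrix.mul_assoc]
    rw [hQ', hAdef]
    push_cast
    have hε0 : (ε : ℂ) ≠ 0 := by exact_mod_cast hε.ne'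
    have hσ0 : (σ2 : ℂ) ≠ 0 := by exact_mod_cast hσ.ne'
    match_scalars <;> field_simp
  rw [step1, step2, hmat, smulPSD_iff (by positivity)]
end

section
/- Let U₁,…,U_K be matrices where U_k is M×r_k with orthonormal columns, r_k ≤ M for all k, and let T = max_{1≤k≤K} r_k. Then there exists a T×M complex matrix P such that rank(P U_k) = r_k for all k = 1,…,K. -/
open Matrix

lemma stmt_5_aux_eval (T M rk : ℕ) (h : rk ≤ T) (Uk : Matrix (Fin M) (Fin rk) ℂ)
    (x : Fin T × Fin M → ℂ) :
    MvPolynomial.eval x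
      ((((Matrix.of fun i j => MvPolynomial.X (i, j) :
            Matrix (Fin T) (Fin M) (MvPolynomial (Fin T × Fin M) ℂ)) *
          Uk.map MvPolynomial.C).submatrix (Fin.castLE h) id).det) =
      (((Matrix.of fun i j => x (i, j)) * Uk).submatrix (Fin.castLE h) id).det := by
  rw [RingHom.map_det]
  congr 1
  ext a b
  simp [RingHom.mapMatrix_apply, Matrix.mul_apply, map_sum]
  change MvPolynomial.eval x (∑ j, MvPolynomial.X (Fin.castLE h a, j) * MvPolynomial.C (Uk j b)) = _
  simp [map_sum]

lemma stmt_5_aux_top (T M rk : ℕ) (h : rk ≤ T) (Uk : Matrix (Fin M) (Fin rk) ℂ)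
    (hUk : Ukᴴ * Uk = 1) :
    ∃ x : Fin T × Fin M → ℂ,
      (((Matrix.of fun i j => x (i, j)) * Uk).submatrix (Fin.castLE h) id).det = 1 := by
  classical
  refine ⟨fun p => if hp : (p.1 : ℕ) < rk then Ukᴴ ⟨p.1, hp⟩ p.2 else 0, ?_⟩
  have : ((Matrix.of fun (i : Fin T) (j : Fin M) =>
        (if hp : ((i, j).1 : ℕ) < rk then Ukᴴ ⟨(i, j).1, hp⟩ (i, j).2 else 0 : ℂ)) * Uk).submatrix
          (Fin.castLE h) id = (1 : Matrix (Fin rk) (Fin rk) ℂ) := by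
    ext a b
    have hab := congrFun (congrFun hUk a) b
    rw [Matrix.mul_apply] at hab
    simp only [Matrix.submatrix_apply, Matrix.mul_apply, id]
    rw [← hab]
    apply Finset.sum_congr rfl
    intro j _
    have ha : ((Fin.castLE h a : Fin T) : ℕ) < rk := by simp
    simp only [Matrix.of_apply]
    rw [dif_pos ha]
    rfl
  rw [this, Matrix.det_one]

/-- With T = max_k r_k, there exists a T×M pilot matrix P with rank(P U_k) = r_k for all k. -/
theorem stmt_5 (M K : ℕ) (r : Fin K → ℕ) (hrM : ∀ k, r k ≤ M)
    (U : (k : Fin K) → Matrix (Fin M) (Fin (r k)) ℂ)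
    (hU : ∀ k, (U k)ᴴ * U k = 1) :
    ∃ P : Matrix (Fin (Finset.univ.sup r)) (Fin M) ℂ,
      ∀ k, (P * U k).rank = r k := by
  classical
  set T : ℕ := Finset.univ.sup r with hT
  have hrT : ∀ k, r k ≤ T := fun k => Finset.le_sup (Finset.mem_univ k)
  let g : Fin K → MvPolynomial (Fin T × Fin M) ℂ := fun k =>
    (((Matrix.of fun i j => MvPolynomial.X (i, j) :
          Matrix (Fin T) (Fin M) (MvPolynomial (Fin T × Fin M) ℂ)) *
        (U k).map MvPolynomial.C).submatrix (Fin.castLE (hrT k)) id).det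
  have heval : ∀ (k : Fin K) (x : Fin T × Fin M → ℂ),
      MvPolynomial.eval x (g k) =
        (((Matrix.of fun i j => x (i, j)) * U k).submatrix (Fin.castLE (hrT k)) id).det :=
    fun k x => stmt_5_aux_eval T M (r k) (hrT k) (U k) x
  have hg : ∀ k, g k ≠ 0 := by
    intro k hk
    obtain ⟨x, hx⟩ := stmt_5_aux_top T M (r k) (hrT k) (U k) (hU k)
    have h1 : MvPolynomial.eval x (g k) = 1 := by rw [heval k x, hx]
    rw [hk, map_zero] at h1
    exact zero_ne_one h1
  have hprod : (∏ k, g k) ≠ 0 := Finset.prod_ne_zero_iff.mpr fun k _ => hg k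
  have hx : ∃ x : Fin T × Fin M → ℂ, MvPolynomial.eval x (∏ k, g k) ≠ 0 := by
    by_contra h
    push_neg at h
    exact hprod (MvPolynomial.funext fun x => by rw [h x, map_zero])
  obtain ⟨x, hx⟩ := hx
  refine ⟨Matrix.of fun i j => x (i, j), fun k => ?_⟩
  have hk : MvPolynomial.eval x (g k) ≠ 0 := by
    intro h0
    apply hx
    rw [map_prod]
    exact Finset.prod_eq_zero (Finset.mem_univ k) h0
  rw [heval k x] at hk
  set P : Matrix (Fin T) (Fin M) ℂ := Matrix.of fun i j => x (i, j) with hP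
  have hsub : (((P * U k).submatrix (Fin.castLE (hrT k)) id)).rank = r k := by
    rw [Matrix.rank_of_isUnit _ ((Matrix.isUnit_iff_isUnit_det _).mpr
      (isUnit_iff_ne_zero.mpr hk))]
    simp
  have hle : (P * U k).rank ≤ r k := by
    simpa using (P * U k).rank_le_width
  have hge : r k ≤ (P * U k).rank := by
    let E : Matrix (Fin (r k)) (Fin T) ℂ :=
      Matrix.of fun i j => if Fin.castLE (hrT k) i = j then 1 else 0
    have hE : E * (P * U k) = (P * U k).submatrix (Fin.castLE (hrT k)) id := by
      ext a b
      simp [E, Matrix.mul_apply, ite_mul]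
    have := Matrix.rank_mul_le_right E (P * U k)
    rw [hE, hsub] at this
    exact this
  omega
end

section
/- Let U₁,…,U_K be as in the pilot design problem (U_k is M×r_k with orthonormal columns), Λ_k diagonal positive definite with all eigenvalues > ε_k > 0, σ_k² > 0. Then the following are equivalent: (i) there exists a T×M matrix P with C_{e,k}(P) ⪯ ε_k I_M for all k; (ii) there exists a T×M matrix P with rank(P U_k) = r_k for all k. -/
open Matrix ComplexOrder

set_option linter.unusedSectionVars false
set_option maxHeartbeats 1000000

section auxPD
variable {n : Type*} [Fintype n] [DecidableEq n]

private lemma hermOne (c : ℝ) : ((c:ℂ) • (1 : Matrix n n ℂ)).IsHermitian := by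
  unfold Matrix.IsHermitian
  rw [conjTranspose_smul, conjTranspose_one]
  simp

private lemma psd_smul {A : Matrix n n ℂ} (hA : A.PosSemidef) {c : ℝ} (hc : 0 ≤ c) :
    ((c:ℂ) • A).PosSemidef := by
  refine PosSemidef.of_dotProduct_mulVec_nonneg ?_ (fun x => ?_)
  · unfold Matrix.IsHermitian
    rw [conjTranspose_smul, hA.1.eq]
    simp
  · rw [smul_mulVec, dotProduct_smul, smul_eq_mul]
    exact mul_nonneg (by exact_mod_cast Complex.zero_le_real.2 hc) (hA.dotProduct_mulVec_nonneg x)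

private lemma pd_smul {A : Matrix n n ℂ} (hA : A.PosDef) {c : ℝ} (hc : 0 < c) :
    ((c:ℂ) • A).PosDef := by
  refine PosDef.of_dotProduct_mulVec_pos (psd_smul hA.posSemidef hc.le).1 fun x hx => ?_
  rw [smul_mulVec, dotProduct_smul, smul_eq_mul]
  exact mul_pos (Complex.zero_lt_real.2 hc) (hA.dotProduct_mulVec_pos hx)

open MatrixOrder in
private lemma psd_mul_affine {H : Matrix n n ℂ} (hH : H.PosSemidef) (a b : ℂ)
    (hT : (a • 1 + b • H).PosSemidef) : (H * (a • 1 + b • H)).PosSemidef := by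
  set R := CFC.sqrt H with hRdef
  have hRH : R * R = H := CFC.sqrt_mul_sqrt_self H hH.nonneg
  have hRh : Rᴴ = R := (CFC.sqrt_nonneg H).posSemidef.isHermitian
  have hHR : H * R = R * H := by
    conv_lhs => rw [← hRH]
    conv_rhs => rw [← hRH]
    rw [Matrix.mul_assoc]
  have hcomm : (a • 1 + b • H) * R = R * (a • 1 + b • H) := by
    simp only [Matrix.add_mul, Matrix.mul_add, Matrix.smul_mul, Matrix.mul_smul,
      Matrix.one_mul, Matrix.mul_one, hHR]
  have hHT : H * (a • 1 + b • H) = (a • 1 + b • H) * H := by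
    simp only [Matrix.add_mul, Matrix.mul_add, Matrix.smul_mul, Matrix.mul_smul,
      Matrix.one_mul, Matrix.mul_one]
  have key : Rᴴ * (a • 1 + b • H) * R = H * (a • 1 + b • H) := by
    rw [hRh, ← hcomm, Matrix.mul_assoc, hRH, ← hHT]
  rw [← key]
  exact hT.conjTranspose_mul_mul_same R

private lemma quad_transfer {H B : Matrix n n ℂ} (hH : H.IsHermitian)
    (hinv : H * H⁻¹ = 1) (x : n → ℂ) :
    star x ⬝ᵥ (B *ᵥ x) = star (H⁻¹ *ᵥ x) ⬝ᵥ ((H * B * H) *ᵥ (H⁻¹ *ᵥ x)) := by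
  set y := H⁻¹ *ᵥ x with hy
  have hxy : x = H *ᵥ y := by rw [hy, Matrix.mulVec_mulVec, hinv, Matrix.one_mulVec]
  conv_lhs => rw [hxy]
  rw [star_mulVec, hH.eq, Matrix.mulVec_mulVec, ← dotProduct_mulVec,
    Matrix.mulVec_mulVec, ← Matrix.mul_assoc]

private lemma key1 {H : Matrix n n ℂ} (hH : H.PosDef) {c : ℝ} (hc : 0 < c)
    (h : (H - (c:ℂ) • 1).PosSemidef) : (((c⁻¹:ℝ):ℂ) • 1 - H⁻¹).PosSemidef := by
  have hdet : IsUnit H.det := (Matrix.isUnit_iff_isUnit_det H).mp hH.isUnit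
  have hinv : H * H⁻¹ = 1 := Matrix.mul_nonsing_inv H hdet
  have hcne : ((c:ℂ)) ≠ 0 := by exact_mod_cast hc.ne'
  have e : H - (c:ℂ) • 1 = (-(c:ℂ)) • 1 + (1:ℂ) • H := by
    rw [neg_smul, one_smul]; abel
  have hX : (H * (H - (c:ℂ) • 1)).PosSemidef := by
    rw [e]; exact psd_mul_affine hH.posSemidef _ _ (e ▸ h)
  have hmat : H * ((((c⁻¹:ℝ)):ℂ) • 1 - H⁻¹) * H = ((c⁻¹:ℝ):ℂ) • (H * (H - (c:ℂ) • 1)) := by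
    rw [Matrix.mul_sub, Matrix.mul_smul, Matrix.mul_one, hinv, Matrix.sub_mul,
      Matrix.smul_mul, Matrix.one_mul, Matrix.mul_sub, Matrix.mul_smul, Matrix.mul_one,
      smul_sub, smul_smul]
    push_cast
    rw [inv_mul_cancel₀ hcne, one_smul]
  refine PosSemidef.of_dotProduct_mulVec_nonneg ((hermOne _).sub hH.inv.isHermitian) fun x => ?_
  rw [quad_transfer hH.isHermitian hinv x, hmat,
    smul_mulVec, dotProduct_smul, smul_eq_mul]
  exact mul_nonneg (by exact_mod_cast Complex.zero_le_real.2 (inv_nonneg.mpr hc.le)) (hX.dotProduct_mulVec_nonneg _)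

private lemma key2 {H : Matrix n n ℂ} (hH : H.PosDef) {c : ℝ} (hc : 0 < c)
    (h : ((c:ℂ) • 1 - H).PosSemidef) : (H⁻¹ - ((c⁻¹:ℝ):ℂ) • 1).PosSemidef := by
  have hdet : IsUnit H.det := (Matrix.isUnit_iff_isUnit_det H).mp hH.isUnit
  have hinv : H * H⁻¹ = 1 := Matrix.mul_nonsing_inv H hdet
  have hcne : ((c:ℂ)) ≠ 0 := by exact_mod_cast hc.ne'
  have e : (c:ℂ) • 1 - H = ((c:ℂ)) • 1 + (-1:ℂ) • H := by
    rw [neg_smul, one_smul]; abel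
  have hX : (H * ((c:ℂ) • 1 - H)).PosSemidef := by
    rw [e]; exact psd_mul_affine hH.posSemidef _ _ (e ▸ h)
  have hmat : H * (H⁻¹ - (((c⁻¹:ℝ)):ℂ) • 1) * H = ((c⁻¹:ℝ):ℂ) • (H * ((c:ℂ) • 1 - H)) := by
    rw [Matrix.mul_sub, Matrix.mul_smul, Matrix.mul_one, hinv, Matrix.sub_mul,
      Matrix.smul_mul, Matrix.one_mul, Matrix.mul_sub, Matrix.mul_smul, Matrix.mul_one,
      smul_sub, smul_smul]
    push_cast
    rw [inv_mul_cancel₀ hcne, one_smul]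
  refine PosSemidef.of_dotProduct_mulVec_nonneg (hH.inv.isHermitian.sub (hermOne _)) fun x => ?_
  rw [quad_transfer hH.isHermitian hinv x, hmat,
    smul_mulVec, dotProduct_smul, smul_eq_mul]
  exact mul_nonneg (by exact_mod_cast Complex.zero_le_real.2 (inv_nonneg.mpr hc.le)) (hX.dotProduct_mulVec_nonneg _)

private lemma exists_pd_lower {G : Matrix n n ℂ} (hG : G.PosDef) :
    ∃ δ : ℝ, 0 < δ ∧ (G - (δ:ℂ) • 1).PosSemidef := by
  rcases isEmpty_or_nonempty n with hn | hn
  · exact ⟨1, one_pos, by rw [Subsingleton.elim (G - ((1:ℝ):ℂ) • 1) 0]; exact .zero⟩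
  · set hA := hG.isHermitian with hAdef
    set δ := Finset.univ.inf' Finset.univ_nonempty hA.eigenvalues with hδ
    refine ⟨δ, by rw [hδ, Finset.lt_inf'_iff]; exact fun i _ => hG.eigenvalues_pos i, ?_⟩
    set V : Matrix n n ℂ := (hA.eigenvectorUnitary : Matrix n n ℂ) with hV
    set D : Matrix n n ℂ := diagonal (RCLike.ofReal ∘ hA.eigenvalues) with hD
    have hVV : V * star V = 1 := (Matrix.mem_unitaryGroup_iff).mp hA.eigenvectorUnitary.2
    have hone : (δ:ℂ) • (1 : Matrix n n ℂ) = V * ((δ:ℂ) • 1) * star V := by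
      rw [Matrix.mul_smul, Matrix.mul_one, Matrix.smul_mul, hVV]
    have hsw : (δ:ℂ) • (1 : Matrix n n ℂ) = diagonal (fun _ => (δ:ℂ)) := by
      ext i j
      by_cases h : i = j <;> simp [h, Matrix.one_apply, Matrix.diagonal_apply]
    have hsplit : G - (δ:ℂ) • 1 = V * (D - (δ:ℂ) • 1) * star V := by
      conv_rhs => rw [Matrix.mul_sub, Matrix.sub_mul]
      rw [← hone]; exact congrArg (· - (δ:ℂ) • 1) hA.spectral_theorem
    have hdpsd : (D - (δ:ℂ) • 1).PosSemidef := by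
      rw [hD, hsw, Matrix.diagonal_sub]
      refine posSemidef_diagonal_iff.mpr fun i => ?_
      have e2 : ((hA.eigenvalues i : ℂ)) - (δ:ℂ) = ((hA.eigenvalues i - δ : ℝ) : ℂ) := by
        push_cast; ring
      simp only [Pi.sub_apply, Function.comp_apply]
      show (0:ℂ) ≤ ((hA.eigenvalues i : ℝ):ℂ) - ((δ:ℝ):ℂ)
      rw [e2]
      exact Complex.zero_le_real.2 (sub_nonneg.2 (Finset.inf'_le _ (Finset.mem_univ i)))
    rw [hsplit, Matrix.star_eq_conjTranspose]
    exact hdpsd.mul_mul_conjTranspose_same V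

end auxPD

private lemma rank_full_iff_pd {t s : ℕ} (A : Matrix (Fin t) (Fin s) ℂ) :
    A.rank = s ↔ (Aᴴ * A).PosDef := by
  have hquad : ∀ x, star x ⬝ᵥ ((Aᴴ * A) *ᵥ x) = star (A *ᵥ x) ⬝ᵥ (A *ᵥ x) := by
    intro x
    rw [← Matrix.mulVec_mulVec, dotProduct_mulVec, ← star_mulVec]
  constructor
  · intro h
    have hker : LinearMap.ker A.mulVecLin = ⊥ := by
      have h1 := LinearMap.finrank_range_add_finrank_ker A.mulVecLin
      rw [Module.finrank_fin_fun] at h1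
      have h2 : Module.finrank ℂ (LinearMap.range A.mulVecLin) = s := h
      rw [h2] at h1
      have : Module.finrank ℂ (LinearMap.ker A.mulVecLin) = 0 := by omega
      exact Submodule.finrank_eq_zero.mp this
    refine PosDef.of_dotProduct_mulVec_pos (posSemidef_conjTranspose_mul_self A).isHermitian fun x hx => ?_
    have hAx : A *ᵥ x ≠ 0 := by
      intro h0
      exact hx (by simpa using LinearMap.ker_eq_bot'.mp hker x (by simpa using h0))
    rw [hquad]
    exact dotProduct_star_self_pos_iff.mpr hAx
  · intro h
    have hinj : Function.Injective A.mulVecLin := by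
      rw [← LinearMap.ker_eq_bot]
      refine LinearMap.ker_eq_bot'.mpr fun x hx => ?_
      by_contra hne
      have hp := h.dotProduct_mulVec_pos hne
      rw [hquad] at hp
      simp only [Matrix.mulVecLin_apply] at hx
      rw [hx] at hp
      simp at hp
    rw [Matrix.rank, LinearMap.finrank_range_of_inj hinj, Module.finrank_fin_fun]

private lemma conj_form {T M rk : ℕ} (P : Matrix (Fin T) (Fin M) ℂ)
    (U : Matrix (Fin M) (Fin rk) ℂ) : Uᴴ * Pᴴ * P * U = (P * U)ᴴ * (P * U) := by
  simp only [conjTranspose_mul, Matrix.mul_assoc]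

private lemma proj_psd {M rk : ℕ} (U : Matrix (Fin M) (Fin rk) ℂ) (hU : Uᴴ * U = 1) :
    ((1 : Matrix (Fin M) (Fin M) ℂ) - U * Uᴴ).PosSemidef := by
  have h2 : (U * Uᴴ) * (U * Uᴴ) = U * Uᴴ := by
    rw [Matrix.mul_assoc, ← Matrix.mul_assoc Uᴴ U Uᴴ, hU, Matrix.one_mul]
  have h : ((1 : Matrix (Fin M) (Fin M) ℂ) - U * Uᴴ)ᴴ * (1 - U * Uᴴ) = 1 - U * Uᴴ := by
    rw [conjTranspose_sub, conjTranspose_one, conjTranspose_mul, conjTranspose_conjTranspose,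
      Matrix.sub_mul, Matrix.one_mul, Matrix.mul_sub, Matrix.mul_one, h2]
    abel
  rw [← h]
  exact posSemidef_conjTranspose_mul_self _

/-- Feasibility of the per-user error covariance constraints is equivalent to
feasibility of the per-user full-rank conditions on P U_k. -/
theorem stmt_14 (M T K : ℕ) (r : Fin K → ℕ) (hrM : ∀ k, r k ≤ M)
    (U : (k : Fin K) → Matrix (Fin M) (Fin (r k)) ℂ)
    (hU : ∀ k, (U k)ᴴ * U k = 1)
    (d : (k : Fin K) → Fin (r k) → ℝ) (hd : ∀ k i, 0 < d k i)
    (ε : Fin K → ℝ) (hε : ∀ k, 0 < ε k) (hdε : ∀ k i, ε k < d k i)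
    (σ2 : Fin K → ℝ) (hσ : ∀ k, 0 < σ2 k)
    (Λ : (k : Fin K) → Matrix (Fin (r k)) (Fin (r k)) ℂ)
    (hΛ : ∀ k, Λ k = Matrix.diagonal (fun i => (d k i : ℂ)))
    (Ce : Matrix (Fin T) (Fin M) ℂ → (k : Fin K) → Matrix (Fin M) (Fin M) ℂ)
    (hCe : ∀ P k, Ce P k
      = U k * ((Λ k)⁻¹ + ((σ2 k : ℂ))⁻¹ • ((U k)ᴴ * Pᴴ * P * U k))⁻¹ * (U k)ᴴ) :
    (∃ P : Matrix (Fin T) (Fin M) ℂ,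
        ∀ k, ((ε k : ℂ) • (1 : Matrix (Fin M) (Fin M) ℂ) - Ce P k).PosSemidef)
      ↔ (∃ P : Matrix (Fin T) (Fin M) ℂ, ∀ k, (P * U k).rank = r k) := by
  constructor
  · rintro ⟨P, hP⟩
    refine ⟨P, fun k => ?_⟩
    rw [rank_full_iff_pd]
    have hΛpd : (Λ k).PosDef := by
      rw [hΛ]
      exact posDef_diagonal_iff.mpr fun i => Complex.zero_lt_real.2 (hd k i)
    set s : ℝ := (σ2 k)⁻¹ with hs_def
    have hs : 0 < s := inv_pos.2 (hσ k)
    have hsmul : ((σ2 k : ℂ))⁻¹ = ((s:ℝ):ℂ) := by rw [hs_def]; push_cast; ring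
    have hGpsd : ((P * U k)ᴴ * (P * U k)).PosSemidef := posSemidef_conjTranspose_mul_self _
    set H := (Λ k)⁻¹ + ((σ2 k : ℂ))⁻¹ • ((U k)ᴴ * Pᴴ * P * U k) with hHdef
    have hHalt : H = (Λ k)⁻¹ + ((s:ℝ):ℂ) • ((P * U k)ᴴ * (P * U k)) := by
      rw [hHdef, conj_form, hsmul]
    have hHpd : H.PosDef := by
      rw [hHalt]; exact hΛpd.inv.add_posSemidef (psd_smul hGpsd hs.le)
    have hCe' : Ce P k = U k * H⁻¹ * (U k)ᴴ := by rw [hCe]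
    have h1 : ((ε k : ℂ) • 1 - H⁻¹).PosSemidef := by
      have h0 := (hP k).conjTranspose_mul_mul_same (U k)
      have e : (U k)ᴴ * ((ε k : ℂ) • (1 : Matrix (Fin M) (Fin M) ℂ) - Ce P k) * U k
          = (ε k : ℂ) • 1 - H⁻¹ := by
        rw [hCe', Matrix.mul_sub, Matrix.sub_mul, Matrix.mul_smul, Matrix.mul_one,
          Matrix.smul_mul, hU k]
        congr 1
        rw [← Matrix.mul_assoc, ← Matrix.mul_assoc, hU k, Matrix.one_mul,
          Matrix.mul_assoc, hU k, Matrix.mul_one]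
      rwa [e] at h0
    have h2 := key2 hHpd.inv (hε k) h1
    rw [Matrix.nonsing_inv_nonsing_inv H ((Matrix.isUnit_iff_isUnit_det H).mp hHpd.isUnit)] at h2
    have hΛinv : (Λ k)⁻¹ = diagonal (fun i => ((d k i : ℂ))⁻¹) := by
      rw [hΛ]
      apply Matrix.inv_eq_right_inv
      rw [Matrix.diagonal_mul_diagonal]
      rw [show (fun i => (d k i : ℂ) * ((d k i : ℂ))⁻¹) = fun _ => (1:ℂ) from
        funext fun i => mul_inv_cancel₀ (by exact_mod_cast (hd k i).ne')]
      exact Matrix.diagonal_one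
    have hdiagpd : ((((ε k)⁻¹:ℝ):ℂ) • 1 - (Λ k)⁻¹).PosDef := by
      have hsw : ((((ε k)⁻¹:ℝ)):ℂ) • (1 : Matrix (Fin (r k)) (Fin (r k)) ℂ)
          = diagonal (fun _ => ((((ε k)⁻¹:ℝ)):ℂ)) := by
        ext i j; by_cases h : i = j <;> simp [h, Matrix.one_apply, Matrix.diagonal_apply]
      rw [hΛinv, hsw, Matrix.diagonal_sub]
      refine posDef_diagonal_iff.mpr fun i => ?_
      have e2 : ((((ε k)⁻¹:ℝ)):ℂ) - ((d k i : ℂ))⁻¹ = ((((ε k)⁻¹ - (d k i)⁻¹ : ℝ)):ℂ) := by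
        push_cast; ring
      show (0:ℂ) < ((((ε k)⁻¹:ℝ)):ℂ) - ((d k i : ℂ))⁻¹
      rw [e2]
      exact Complex.zero_lt_real.2 (by rw [sub_pos]; exact inv_strictAnti₀ (hε k) (hdε k i))
    have hsG : (((s:ℝ):ℂ) • ((P * U k)ᴴ * (P * U k))).PosDef := by
      have he : ((s:ℝ):ℂ) • ((P * U k)ᴴ * (P * U k))
          = (H - (((ε k)⁻¹:ℝ):ℂ) • 1) + ((((ε k)⁻¹:ℝ):ℂ) • 1 - (Λ k)⁻¹) := by
        rw [hHalt]; abel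
      rw [he]
      exact Matrix.PosDef.posSemidef_add h2 hdiagpd
    have he2 : (P * U k)ᴴ * (P * U k) = ((σ2 k : ℝ):ℂ) • (((s:ℝ):ℂ) • ((P * U k)ᴴ * (P * U k))) := by
      rw [smul_smul, hs_def]
      push_cast
      rw [mul_inv_cancel₀ (by exact_mod_cast (hσ k).ne' : ((σ2 k : ℂ)) ≠ 0), one_smul]
    rw [he2]
    exact pd_smul hsG (hσ k)
  · rintro ⟨P₀, hP₀⟩
    have hGpd : ∀ k, ((P₀ * U k)ᴴ * (P₀ * U k)).PosDef := fun k =>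
      (rank_full_iff_pd _).mp (hP₀ k)
    choose δ hδpos hδ using fun k => exists_pd_lower (hGpd k)
    set t : ℝ := 1 + ∑ j, σ2 j / (ε j * δ j) with ht
    have htpos : 0 < t := by
      have : 0 ≤ ∑ j, σ2 j / (ε j * δ j) :=
        Finset.sum_nonneg fun j _ =>
          div_nonneg (hσ j).le (mul_nonneg (hε j).le (hδpos j).le)
      rw [ht]
      linarith
    have htk : ∀ k, σ2 k / (ε k * δ k) ≤ t := by
      intro k
      have h1 : σ2 k / (ε k * δ k) ≤ ∑ j, σ2 j / (ε j * δ j) :=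
        Finset.single_le_sum (f := fun j => σ2 j / (ε j * δ j))
          (fun j _ => div_nonneg (hσ j).le (mul_nonneg (hε j).le (hδpos j).le))
          (Finset.mem_univ k)
      linarith
    set α : ℝ := Real.sqrt t with hα
    refine ⟨(α:ℂ) • P₀, fun k => ?_⟩
    set s : ℝ := (σ2 k)⁻¹ with hs_def
    have hs : 0 < s := inv_pos.2 (hσ k)
    have hsmul : ((σ2 k : ℂ))⁻¹ = ((s:ℝ):ℂ) := by rw [hs_def]; push_cast; ring
    have hΛpd : (Λ k).PosDef := by
      rw [hΛ]
      exact posDef_diagonal_iff.mpr fun i => Complex.zero_lt_real.2 (hd k i)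
    have hGscaled : (((α:ℂ) • P₀) * U k)ᴴ * (((α:ℂ) • P₀) * U k)
        = ((t:ℝ):ℂ) • ((P₀ * U k)ᴴ * (P₀ * U k)) := by
      rw [Matrix.smul_mul, conjTranspose_smul, Matrix.smul_mul, Matrix.mul_smul,
        smul_smul, Complex.star_def, Complex.conj_ofReal, ← Complex.ofReal_mul,
        Real.mul_self_sqrt htpos.le]
    set H := (Λ k)⁻¹ + ((σ2 k : ℂ))⁻¹ • ((U k)ᴴ * ((α:ℂ) • P₀)ᴴ * ((α:ℂ) • P₀) * U k)
      with hHdef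
    have hHalt : H = (Λ k)⁻¹ + ((s * t : ℝ):ℂ) • ((P₀ * U k)ᴴ * (P₀ * U k)) := by
      rw [hHdef, conj_form, hsmul, hGscaled, smul_smul, ← Complex.ofReal_mul]
    have hG0psd : ((P₀ * U k)ᴴ * (P₀ * U k)).PosSemidef := (hGpd k).posSemidef
    have hHpd : H.PosDef := by
      rw [hHalt]
      exact hΛpd.inv.add_posSemidef (psd_smul hG0psd (mul_nonneg hs.le htpos.le))
    -- lower bound on H
    have hcoef : 0 ≤ s * t * δ k - (ε k)⁻¹ := by
      have e0 : s * (σ2 k / (ε k * δ k)) * δ k = (ε k)⁻¹ := by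
        rw [hs_def]
        field_simp
        rw [div_eq_div_iff
          (mul_ne_zero (mul_ne_zero (hσ k).ne' (hε k).ne') (hδpos k).ne') (hε k).ne']
        ring
      have h1 : s * (σ2 k / (ε k * δ k)) * δ k ≤ s * t * δ k :=
        mul_le_mul_of_nonneg_right
          (mul_le_mul_of_nonneg_left (htk k) hs.le) (hδpos k).le
      rw [e0] at h1
      linarith
    have hlow : (H - (((ε k)⁻¹:ℝ):ℂ) • 1).PosSemidef := by
      have he : H - (((ε k)⁻¹:ℝ):ℂ) • 1
          = (Λ k)⁻¹ + ((((s * t : ℝ)):ℂ) • ((P₀ * U k)ᴴ * (P₀ * U k) - ((δ k : ℝ):ℂ) • 1)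
            + (((s * t * δ k - (ε k)⁻¹ : ℝ)):ℂ) • 1) := by
        rw [hHalt]
        push_cast
        module
      rw [he]
      exact (hΛpd.inv.posSemidef).add
        ((psd_smul (hδ k) (mul_nonneg hs.le htpos.le)).add (psd_smul PosSemidef.one hcoef))
    have h3 := key1 hHpd (inv_pos.2 (hε k)) hlow
    rw [inv_inv] at h3
    -- assemble
    rw [hCe]
    have hfin : (ε k : ℂ) • (1 : Matrix (Fin M) (Fin M) ℂ) - U k * H⁻¹ * (U k)ᴴ
        = ((ε k : ℝ):ℂ) • (1 - U k * (U k)ᴴ)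
          + U k * (((ε k : ℝ):ℂ) • 1 - H⁻¹) * (U k)ᴴ := by
      rw [Matrix.mul_sub, Matrix.sub_mul, Matrix.mul_smul, Matrix.mul_one, Matrix.smul_mul]
      push_cast
      module
    rw [← hHdef, hfin]
    exact (psd_smul (proj_psd (U k) (hU k)) (hε k).le).add
      (h3.mul_mul_conjTranspose_same (U k))
end

section
/- Under the assumptions that each Λ_k has all eigenvalues strictly greater than ε_k > 0, the minimum T for which there exists a T×M matrix P satisfying C_{e,k}(P) ⪯ ε_k I_M for all k = 1,…,K equals max_{1≤k≤K} r_k. -/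
open Matrix ComplexOrder

variable {n : Type*} [Fintype n]

/-- quadratic form of a hermitian matrix is star-fixed -/
lemma herm_quad_im {A : Matrix n n ℂ} (hA : A.IsHermitian) (x : n → ℂ) :
    (star x ⬝ᵥ (A *ᵥ x)).im = 0 := by
  have h1 : star (A *ᵥ x) ⬝ᵥ x = star x ⬝ᵥ (A *ᵥ x) := by
    rw [star_mulVec, ← dotProduct_mulVec, hA.eq]
  have h : star (star x ⬝ᵥ (A *ᵥ x)) = star x ⬝ᵥ (A *ᵥ x) := by
    conv_lhs => rw [star_dotProduct, star_star]
    exact h1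
  simpa [Complex.ext_iff, neg_eq_iff_add_eq_zero] using congrArg Complex.im h

lemma posSemidef_of_re {A : Matrix n n ℂ} (hA : A.IsHermitian)
    (h : ∀ x, 0 ≤ (star x ⬝ᵥ (A *ᵥ x)).re) : A.PosSemidef :=
  PosSemidef.of_dotProduct_mulVec_nonneg hA fun x => Complex.le_def.2 ⟨by simpa using h x, by simp [herm_quad_im hA x]⟩

lemma posDef_of_re {A : Matrix n n ℂ} (hA : A.IsHermitian)
    (h : ∀ x, x ≠ 0 → 0 < (star x ⬝ᵥ (A *ᵥ x)).re) : A.PosDef :=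
  PosDef.of_dotProduct_mulVec_pos hA fun x hx => Complex.lt_def.2 ⟨by simpa using h x hx, by simp [herm_quad_im hA x]⟩

lemma re_nonneg_dp (x : n → ℂ) : 0 ≤ (star x ⬝ᵥ x).re := by
  simpa [dotProduct, Complex.re_sum] using
    Finset.sum_nonneg fun i _ => by
      simpa [Complex.normSq_apply] using Complex.normSq_nonneg (x i)

lemma nre_eq_norm_sq (x : n → ℂ) :
    (star x ⬝ᵥ x).re = ‖(WithLp.equiv 2 (n → ℂ)).symm x‖ ^ 2 := by
  have h := inner_self_eq_norm_sq (𝕜 := ℂ) ((WithLp.equiv 2 (n → ℂ)).symm x)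
  rw [show ∀ a b : n → ℂ, inner ℂ ((WithLp.equiv 2 (n → ℂ)).symm a) ((WithLp.equiv 2 (n → ℂ)).symm b) = star a ⬝ᵥ b from fun a b => by rw [dotProduct_comm]; rfl] at h
  simpa using h

lemma dp_cs (z w : n → ℂ) :
    (star z ⬝ᵥ w).re ^ 2 ≤ (star z ⬝ᵥ z).re * (star w ⬝ᵥ w).re := by
  have h := norm_inner_le_norm (𝕜 := ℂ) ((WithLp.equiv 2 (n → ℂ)).symm z)
      ((WithLp.equiv 2 (n → ℂ)).symm w)
  rw [show ∀ a b : n → ℂ, inner ℂ ((WithLp.equiv 2 (n → ℂ)).symm a) ((WithLp.equiv 2 (n → ℂ)).symm b) = star a ⬝ᵥ b from fun a b => by rw [dotProduct_comm]; rfl] at h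
  have h2 : |(star z ⬝ᵥ w).re| ≤ ‖star z ⬝ᵥ w‖ := Complex.abs_re_le_norm _
  have h3 : (star z ⬝ᵥ w).re ^ 2 ≤ ‖star z ⬝ᵥ w‖ ^ 2 := by
    rw [← sq_abs ((star z ⬝ᵥ w).re)]
    exact pow_le_pow_left₀ (abs_nonneg _) h2 2
  calc (star z ⬝ᵥ w).re ^ 2 ≤ ‖star z ⬝ᵥ w‖ ^ 2 := h3
    _ ≤ (‖(WithLp.equiv 2 (n → ℂ)).symm z‖ * ‖(WithLp.equiv 2 (n → ℂ)).symm w‖) ^ 2 := by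
        apply pow_le_pow_left₀ (norm_nonneg _) h
    _ = (star z ⬝ᵥ z).re * (star w ⬝ᵥ w).re := by
        rw [mul_pow, nre_eq_norm_sq, nre_eq_norm_sq]

lemma dp_shift {m : Type*} [Fintype m] (Q : Matrix n m ℂ) (x : n → ℂ) (y : m → ℂ) :
    star x ⬝ᵥ (Q *ᵥ y) = star (Qᴴ *ᵥ x) ⬝ᵥ y := by
  rw [star_mulVec, conjTranspose_conjTranspose, dotProduct_mulVec]

lemma inv_quad_le [DecidableEq n] {B : Matrix n n ℂ} (hB : B.PosDef) {δ : ℝ} (hδ : 0 < δ)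
    (h : ∀ x, δ⁻¹ * (star x ⬝ᵥ x).re ≤ (star x ⬝ᵥ (B *ᵥ x)).re) (z : n → ℂ) :
    (star z ⬝ᵥ (B⁻¹ *ᵥ z)).re ≤ δ * (star z ⬝ᵥ z).re := by
  have hinv := hB.isUnit
  set w := B⁻¹ *ᵥ z with hw
  have hz : B *ᵥ w = z := by
    rw [hw, mulVec_mulVec, Matrix.mul_nonsing_inv _ ((isUnit_iff_isUnit_det _).1 hinv),
      one_mulVec]
  have key : star z ⬝ᵥ w = star w ⬝ᵥ (B *ᵥ w) := by
    conv_lhs => rw [← hz]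
    rw [star_mulVec, hB.isHermitian.eq, ← dotProduct_mulVec]
  set s := (star z ⬝ᵥ w).re with hs
  have h1 : δ⁻¹ * (star w ⬝ᵥ w).re ≤ s := by
    rw [hs, key]; exact h w
  have h2 : s ^ 2 ≤ (star z ⬝ᵥ z).re * (star w ⬝ᵥ w).re := dp_cs z w
  have h3 : 0 ≤ (star z ⬝ᵥ z).re := re_nonneg_dp z
  have h4 : 0 ≤ (star w ⬝ᵥ w).re := re_nonneg_dp w
  have hnw : (star w ⬝ᵥ w).re ≤ δ * s := by
    have := mul_le_mul_of_nonneg_left h1 hδ.le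
    rwa [← mul_assoc, mul_inv_cancel₀ hδ.ne', one_mul] at this
  have hs0 : 0 ≤ s := le_trans (by positivity) h1
  rcases eq_or_lt_of_le hs0 with he | hl
  · rw [← he]; positivity
  · have hmul : s * s ≤ (δ * (star z ⬝ᵥ z).re) * s := by
      calc s * s = s ^ 2 := by ring
        _ ≤ (star z ⬝ᵥ z).re * (star w ⬝ᵥ w).re := h2
        _ ≤ (star z ⬝ᵥ z).re * (δ * s) := by
            exact mul_le_mul_of_nonneg_left hnw h3
        _ = (δ * (star z ⬝ᵥ z).re) * s := by ring
    exact le_of_mul_le_mul_right hmul hl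

lemma feasible_block {m r : Type*} [Fintype m] [DecidableEq m] [Fintype r] [DecidableEq r]
    (U : Matrix m r ℂ) (hU : Uᴴ * U = 1)
    {B : Matrix r r ℂ} (hB : B.PosDef) {ε : ℝ} (hε : 0 < ε)
    (h : ∀ x, ε⁻¹ * (star x ⬝ᵥ x).re ≤ (star x ⬝ᵥ (B *ᵥ x)).re) :
    ((ε : ℂ) • (1 : Matrix m m ℂ) - U * B⁻¹ * Uᴴ).PosSemidef := by
  have hBinv : B⁻¹.IsHermitian := hB.isHermitian.inv
  have hherm : ((ε : ℂ) • (1 : Matrix m m ℂ) - U * B⁻¹ * Uᴴ).IsHermitian := by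
    have h1 : (U * B⁻¹ * Uᴴ)ᴴ = U * B⁻¹ * Uᴴ := by
      rw [conjTranspose_mul, conjTranspose_mul, conjTranspose_conjTranspose, hBinv.eq,
        ← Matrix.mul_assoc]
    have h2 : ((ε : ℂ) • (1 : Matrix m m ℂ))ᴴ = (ε : ℂ) • 1 := by
      rw [conjTranspose_smul, conjTranspose_one, Complex.star_def, Complex.conj_ofReal]
    show _ = _
    rw [conjTranspose_sub, h1, h2]
  refine posSemidef_of_re hherm fun x => ?_
  set z := Uᴴ *ᵥ x with hz
  have hq : star x ⬝ᵥ (((ε : ℂ) • (1 : Matrix m m ℂ) - U * B⁻¹ * Uᴴ) *ᵥ x)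
      = (ε : ℂ) * (star x ⬝ᵥ x) - star z ⬝ᵥ (B⁻¹ *ᵥ z) := by
    rw [sub_mulVec, dotProduct_sub, smul_mulVec, one_mulVec, dotProduct_smul,
      smul_eq_mul, ← mulVec_mulVec, ← mulVec_mulVec, dp_shift]
  -- compare ‖z‖² with ‖x‖²
  have hGh : (1 - U * Uᴴ : Matrix m m ℂ)ᴴ = 1 - U * Uᴴ := by
    rw [conjTranspose_sub, conjTranspose_one, conjTranspose_mul, conjTranspose_conjTranspose]
  have hGmul : (U * Uᴴ) * (U * Uᴴ) = U * Uᴴ := by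
    rw [Matrix.mul_assoc, ← Matrix.mul_assoc Uᴴ U Uᴴ, hU, Matrix.one_mul]
  have hG : (1 - U * Uᴴ : Matrix m m ℂ)ᴴ * (1 - U * Uᴴ) = 1 - U * Uᴴ := by
    rw [hGh]
    simp only [Matrix.sub_mul, Matrix.mul_sub, Matrix.one_mul, Matrix.mul_one, hGmul,
      sub_self, sub_zero]
  have hGpsd : (1 - U * Uᴴ : Matrix m m ℂ).PosSemidef := hG ▸ posSemidef_conjTranspose_mul_self _
  have hzx : (star z ⬝ᵥ z).re ≤ (star x ⬝ᵥ x).re := by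
    have h0 := hGpsd.dotProduct_mulVec_nonneg x
    have hcalc : star x ⬝ᵥ ((1 - U * Uᴴ : Matrix m m ℂ) *ᵥ x)
        = star x ⬝ᵥ x - star z ⬝ᵥ z := by
      rw [sub_mulVec, dotProduct_sub, one_mulVec, ← mulVec_mulVec, dp_shift]
    rw [hcalc] at h0
    have := (Complex.le_def.1 h0).1
    simp only [Complex.sub_re, Complex.zero_re] at this
    linarith
  have hs : (star z ⬝ᵥ (B⁻¹ *ᵥ z)).re ≤ ε * (star z ⬝ᵥ z).re := inv_quad_le hB hε h z
  rw [hq, Complex.sub_re]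
  have hre : ((ε : ℂ) * (star x ⬝ᵥ x)).re = ε * (star x ⬝ᵥ x).re := by
    simp [Complex.mul_re]
  rw [hre]
  have := mul_le_mul_of_nonneg_left hzx hε.le
  linarith

lemma quad_gram {m p : Type*} [Fintype m] [Fintype p] (Q : Matrix p m ℂ) (x : m → ℂ) :
    star x ⬝ᵥ ((Qᴴ * Q) *ᵥ x) = star (Q *ᵥ x) ⬝ᵥ (Q *ᵥ x) := by
  rw [← mulVec_mulVec, dp_shift, conjTranspose_conjTranspose]

lemma diag_inv (d : n → ℝ) (hd : ∀ i, 0 < d i) [DecidableEq n] :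
    (Matrix.diagonal fun i => (d i : ℂ))⁻¹ = Matrix.diagonal fun i => ((d i : ℂ))⁻¹ := by
  apply Matrix.inv_eq_right_inv
  have h : (fun i => (d i : ℂ) * ((d i : ℂ))⁻¹) = fun _ => 1 :=
    funext fun i => mul_inv_cancel₀ (Complex.ofReal_ne_zero.2 (hd i).ne')
  rw [Matrix.diagonal_mul_diagonal, h, Matrix.diagonal_one]

lemma diag_posdef (d : n → ℝ) (hd : ∀ i, 0 < d i) [DecidableEq n] :
    (Matrix.diagonal fun i => ((d i : ℂ))⁻¹).PosDef :=
  Matrix.PosDef.diagonal fun i => by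
    rw [← Complex.ofReal_inv]
    exact Complex.zero_lt_real.2 (inv_pos.2 (hd i))

lemma B_posdef {m r τ : Type*} [Fintype m] [Fintype r] [DecidableEq r] [Fintype τ]
    (U : Matrix m r ℂ) (P : Matrix τ m ℂ) (d : r → ℝ) (hd : ∀ i, 0 < d i)
    {σ : ℝ} (hσ : 0 < σ) :
    ((Matrix.diagonal fun i => ((d i : ℂ))⁻¹) + ((σ : ℂ))⁻¹ • (Uᴴ * Pᴴ * P * U)).PosDef := by
  have hA2 : Uᴴ * Pᴴ * P * U = (P * U)ᴴ * (P * U) := by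
    rw [conjTranspose_mul, Matrix.mul_assoc]
  have hDpd := diag_posdef d hd
  have hAherm : (Uᴴ * Pᴴ * P * U).IsHermitian := by
    rw [hA2]; exact (posSemidef_conjTranspose_mul_self (P * U)).1
  have hherm : ((Matrix.diagonal fun i => ((d i : ℂ))⁻¹)
      + ((σ : ℂ))⁻¹ • (Uᴴ * Pᴴ * P * U)).IsHermitian := by
    show _ = _
    rw [conjTranspose_add, conjTranspose_smul, hDpd.isHermitian.eq, hAherm.eq]
    congr 1
    rw [← Complex.ofReal_inv, Complex.star_def, Complex.conj_ofReal]
  refine posDef_of_re hherm fun x hx => ?_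
  rw [add_mulVec, dotProduct_add, Complex.add_re, smul_mulVec, dotProduct_smul,
    smul_eq_mul, ← Complex.ofReal_inv, Complex.re_ofReal_mul, hA2, quad_gram]
  have h1 : 0 < (star x ⬝ᵥ ((Matrix.diagonal fun i => ((d i : ℂ))⁻¹) *ᵥ x)).re := by
    have := hDpd.dotProduct_mulVec_pos hx
    exact (Complex.lt_def.1 this).1
  have h2 : 0 ≤ σ⁻¹ * (star ((P * U) *ᵥ x) ⬝ᵥ ((P * U) *ᵥ x)).re :=
    mul_nonneg (inv_pos.2 hσ).le (re_nonneg_dp _)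
  linarith

lemma lower_block {m r τ : Type*} [Fintype m] [DecidableEq m] [Fintype r] [DecidableEq r]
    [Fintype τ]
    (U : Matrix m r ℂ) (hU : Uᴴ * U = 1) (P : Matrix τ m ℂ)
    (d : r → ℝ) (hd : ∀ i, 0 < d i) {ε : ℝ} (hε : 0 < ε) (hdε : ∀ i, ε < d i)
    {σ : ℝ} (hσ : 0 < σ)
    (v : r → ℂ) (hv : v ≠ 0) (hker : (P * U) *ᵥ v = 0) :
    ¬ ((ε : ℂ) • (1 : Matrix m m ℂ)
        - U * ((Matrix.diagonal fun i => (d i : ℂ))⁻¹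
          + ((σ : ℂ))⁻¹ • (Uᴴ * Pᴴ * P * U))⁻¹ * Uᴴ).PosSemidef := by
  rw [diag_inv d hd]
  intro hpsd
  set Dinv := Matrix.diagonal (fun i => ((d i : ℂ))⁻¹) with hD
  set B := Dinv + ((σ : ℂ))⁻¹ • (Uᴴ * Pᴴ * P * U) with hB
  have hBpd : B.PosDef := B_posdef U P d hd hσ
  have hBherm : B.IsHermitian := hBpd.isHermitian
  have hA2 : Uᴴ * Pᴴ * P * U = (P * U)ᴴ * (P * U) := by
    rw [conjTranspose_mul, Matrix.mul_assoc]
  have hAv : (Uᴴ * Pᴴ * P * U) *ᵥ v = 0 := by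
    rw [hA2, ← mulVec_mulVec, hker, mulVec_zero]
  have hBv : B *ᵥ v = Dinv *ᵥ v := by
    rw [hB, add_mulVec, smul_mulVec, hAv, smul_zero, add_zero]
  set w := B⁻¹ *ᵥ v with hw
  have hBw : B *ᵥ w = v := by
    rw [hw, mulVec_mulVec, Matrix.mul_nonsing_inv _ ((isUnit_iff_isUnit_det _).1 hBpd.isUnit),
      one_mulVec]
  -- evaluate the PSD hypothesis at x = U *ᵥ v
  have hzv : Uᴴ *ᵥ (U *ᵥ v) = v := by rw [mulVec_mulVec, hU, one_mulVec]
  have hxx : star (U *ᵥ v) ⬝ᵥ (U *ᵥ v) = star v ⬝ᵥ v := by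
    rw [dp_shift, hzv]
  have hq : star (U *ᵥ v) ⬝ᵥ (((ε : ℂ) • (1 : Matrix m m ℂ) - U * B⁻¹ * Uᴴ) *ᵥ (U *ᵥ v))
      = (ε : ℂ) * (star v ⬝ᵥ v) - star v ⬝ᵥ w := by
    rw [sub_mulVec, dotProduct_sub, smul_mulVec, one_mulVec, dotProduct_smul,
      smul_eq_mul, hxx, ← mulVec_mulVec, ← mulVec_mulVec, dp_shift, hzv, hw]
  have hpos := hpsd.dotProduct_mulVec_nonneg (U *ᵥ v)
  rw [hq] at hpos
  have hpos' : 0 ≤ ε * (star v ⬝ᵥ v).re - (star v ⬝ᵥ w).re := by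
    have := (Complex.le_def.1 hpos).1
    simpa [Complex.re_ofReal_mul] using this
  -- lower bound for (star v ⬝ᵥ w).re via the square trick
  have hsq := hBpd.posSemidef.dotProduct_mulVec_nonneg (w - (ε : ℂ) • v)
  have e1 : B *ᵥ (w - (ε : ℂ) • v) = v - (ε : ℂ) • (Dinv *ᵥ v) := by
    rw [mulVec_sub, hBw, mulVec_smul, hBv]
  have e2 : star (w - (ε : ℂ) • v) = star w - (ε : ℂ) • star v := by
    rw [star_sub, star_smul, Complex.star_def, Complex.conj_ofReal]
  have f2 : star w ⬝ᵥ (Dinv *ᵥ v) = star v ⬝ᵥ v := by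
    conv_lhs => rw [← hBv]
    rw [dotProduct_mulVec]
    have hwB : star w ᵥ* B = star v := by
      conv_lhs => rw [← hBherm.eq]
      rw [← star_mulVec, hBw]
    rw [hwB]
  have f1 : (star w ⬝ᵥ v).re = (star v ⬝ᵥ w).re := by
    rw [star_dotProduct]
    simp
  have hexp : (star (w - (ε : ℂ) • v) ⬝ᵥ (B *ᵥ (w - (ε : ℂ) • v))).re
      = (star v ⬝ᵥ w).re - 2 * ε * (star v ⬝ᵥ v).re + ε ^ 2 * (star v ⬝ᵥ (Dinv *ᵥ v)).re := by
    simp only [e1, e2, sub_dotProduct, dotProduct_sub, smul_dotProduct, dotProduct_smul,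
      smul_eq_mul, f2]
    simp only [Complex.sub_re, Complex.add_re, Complex.re_ofReal_mul, f1]
    ring
  have hsq' : 0 ≤ (star v ⬝ᵥ w).re - 2 * ε * (star v ⬝ᵥ v).re
      + ε ^ 2 * (star v ⬝ᵥ (Dinv *ᵥ v)).re := by
    rw [← hexp]
    exact (Complex.le_def.1 hsq).1
  have hterm : ∀ i, (star (v i) * ((↑(d i))⁻¹ * v i)).re = (d i)⁻¹ * Complex.normSq (v i) := by
    intro i
    have h : star (v i) * (((d i : ℂ))⁻¹ * v i) = (((d i)⁻¹ : ℝ) : ℂ) * (star (v i) * v i) := by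
      push_cast; ring
    rw [h, Complex.star_def, ← Complex.normSq_eq_conj_mul_self, ← Complex.ofReal_mul,
      Complex.ofReal_re]
  have hgre : (star v ⬝ᵥ (Dinv *ᵥ v)).re = ∑ i, (d i)⁻¹ * Complex.normSq (v i) := by
    simp only [hD, dotProduct, Matrix.mulVec_diagonal, Complex.re_sum, Pi.star_apply]
    exact Finset.sum_congr rfl fun i _ => hterm i
  have hnre : (star v ⬝ᵥ v).re = ∑ i, Complex.normSq (v i) := by
    simp only [dotProduct, Complex.re_sum, Pi.star_apply]
    refine Finset.sum_congr rfl fun i _ => ?_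
    rw [Complex.star_def, ← Complex.normSq_eq_conj_mul_self, Complex.ofReal_re]
  have hkey : ∀ i, ε * (d i)⁻¹ < 1 := by
    intro i
    rw [← div_eq_mul_inv, div_lt_one (hd i)]
    exact hdε i
  have hgn : ε * (star v ⬝ᵥ (Dinv *ᵥ v)).re < (star v ⬝ᵥ v).re := by
    rw [hgre, hnre, Finset.mul_sum]
    obtain ⟨i0, hi0⟩ := Function.ne_iff.1 hv
    refine Finset.sum_lt_sum (fun i _ => ?_) ⟨i0, Finset.mem_univ i0, ?_⟩
    · calc ε * ((d i)⁻¹ * Complex.normSq (v i)) = (ε * (d i)⁻¹) * Complex.normSq (v i) := by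
            ring
        _ ≤ 1 * Complex.normSq (v i) :=
            mul_le_mul_of_nonneg_right (hkey i).le (Complex.normSq_nonneg _)
        _ = Complex.normSq (v i) := one_mul _
    · calc ε * ((d i0)⁻¹ * Complex.normSq (v i0)) = (ε * (d i0)⁻¹) * Complex.normSq (v i0) := by
            ring
        _ < 1 * Complex.normSq (v i0) :=
            mul_lt_mul_of_pos_right (hkey i0) (Complex.normSq_pos.2 hi0)
        _ = Complex.normSq (v i0) := one_mul _
  have hnpos : 0 < (star v ⬝ᵥ v).re :=
    (Complex.lt_def.1 (Matrix.dotProduct_star_self_pos_iff.2 hv)).1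
  have hfin : ε ^ 2 * (star v ⬝ᵥ (Dinv *ᵥ v)).re < ε * (star v ⬝ᵥ v).re := by
    have h2 := mul_lt_mul_of_pos_left hgn hε
    calc ε ^ 2 * (star v ⬝ᵥ (Dinv *ᵥ v)).re = ε * (ε * (star v ⬝ᵥ (Dinv *ᵥ v)).re) := by ring
      _ < ε * (star v ⬝ᵥ v).re := h2
  linarith

lemma gram_lower {m p : Type*} [Fintype m] [DecidableEq m] [Fintype p] [DecidableEq p]
    (Q : Matrix p m ℂ) (hinj : Function.Injective (Q.mulVec)) :
    ∃ c > 0, ∀ x : m → ℂ, c * (star x ⬝ᵥ x).re ≤ (star (Q *ᵥ x) ⬝ᵥ (Q *ᵥ x)).re := by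
  classical
  set f := Matrix.toEuclideanLin Q with hf
  have hfx : ∀ x : m → ℂ, f ((WithLp.equiv 2 (m → ℂ)).symm x)
      = (WithLp.equiv 2 (p → ℂ)).symm (Q *ᵥ x) := fun x =>
    Matrix.toEuclideanLin_toLp Q x
  have hfinj : Function.Injective f := by
    intro a b hab
    have h1 : Q *ᵥ ((WithLp.equiv 2 (m → ℂ)) a) = Q *ᵥ ((WithLp.equiv 2 (m → ℂ)) b) := by
      have ha := hfx ((WithLp.equiv 2 (m → ℂ)) a)
      have hb := hfx ((WithLp.equiv 2 (m → ℂ)) b)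
      simp only [Equiv.symm_apply_apply] at ha hb
      have := hab
      rw [ha, hb] at this
      exact (WithLp.equiv 2 (p → ℂ)).symm.injective this
    have := hinj h1
    exact (WithLp.equiv 2 (m → ℂ)).injective this
  obtain ⟨c0, hc0, hK⟩ := f.exists_antilipschitzWith (LinearMap.ker_eq_bot.2 hfinj)
  refine ⟨((c0 : ℝ) ^ 2)⁻¹, by positivity, fun x => ?_⟩
  set X := (WithLp.equiv 2 (m → ℂ)).symm x with hX
  have hb : ‖X‖ ≤ (c0 : ℝ) * ‖f X‖ := by
    have := hK.le_mul_dist X 0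
    simpa [map_zero] using this
  have hb2 : ‖X‖ ^ 2 ≤ (c0 : ℝ) ^ 2 * ‖f X‖ ^ 2 := by
    calc ‖X‖ ^ 2 ≤ ((c0 : ℝ) * ‖f X‖) ^ 2 := by
          exact pow_le_pow_left₀ (norm_nonneg _) hb 2
      _ = (c0 : ℝ) ^ 2 * ‖f X‖ ^ 2 := by ring
  have e1 : (star x ⬝ᵥ x).re = ‖X‖ ^ 2 := nre_eq_norm_sq x
  have e2 : (star (Q *ᵥ x) ⬝ᵥ (Q *ᵥ x)).re = ‖f X‖ ^ 2 := by
    rw [nre_eq_norm_sq, hfx]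
  rw [e1, e2]
  have hc2 : (0 : ℝ) < (c0 : ℝ) ^ 2 := by positivity
  calc ((c0 : ℝ) ^ 2)⁻¹ * ‖X‖ ^ 2 ≤ ((c0 : ℝ) ^ 2)⁻¹ * ((c0 : ℝ) ^ 2 * ‖f X‖ ^ 2) :=
        mul_le_mul_of_nonneg_left hb2 (by positivity)
    _ = ‖f X‖ ^ 2 := by field_simp

lemma exists_ker {T R : ℕ} (Q : Matrix (Fin T) (Fin R) ℂ) (hTR : T < R) :
    ∃ v : Fin R → ℂ, v ≠ 0 ∧ Q *ᵥ v = 0 := by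
  have hni : ¬ Function.Injective Q.mulVecLin := by
    intro hinj
    have := LinearMap.finrank_le_finrank_of_injective hinj
    simp only [Module.finrank_pi, Fintype.card_fin] at this
    omega
  rw [← LinearMap.ker_eq_bot] at hni
  obtain ⟨v, hv, hv0⟩ := Submodule.ne_bot_iff _ |>.1 hni
  exact ⟨v, hv0, by simpa [Matrix.mulVecLin_apply] using hv⟩

open MvPolynomial in
lemma exists_goodP (M K T : ℕ) (r : Fin K → ℕ) (hrT : ∀ k, r k ≤ T)
    (U : (k : Fin K) → Matrix (Fin M) (Fin (r k)) ℂ) (hU : ∀ k, (U k)ᴴ * U k = 1) :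
    ∃ P : Matrix (Fin T) (Fin M) ℂ, ∀ k, Function.Injective ((P * U k).mulVec) := by
  classical
  set q : Fin K → MvPolynomial (Fin T × Fin M) ℂ := fun k =>
    Matrix.det (Matrix.of fun i j : Fin (r k) =>
      ∑ m : Fin M, (X (Fin.castLE (hrT k) i, m) : MvPolynomial (Fin T × Fin M) ℂ)
        * C (U k m j)) with hq
  have heval : ∀ (x : Fin T × Fin M → ℂ) k, eval x (q k)
      = Matrix.det (Matrix.of fun i j : Fin (r k) =>
          ∑ m : Fin M, x (Fin.castLE (hrT k) i, m) * U k m j) := by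
    intro x k
    rw [hq, RingHom.map_det]
    congr 1
    ext i j
    simp [Matrix.map_apply]
  have hqne : ∀ k, q k ≠ 0 := by
    intro k h0
    set x0 : Fin T × Fin M → ℂ :=
      fun p => if h : (p.1 : ℕ) < r k then star (U k p.2 ⟨p.1, h⟩) else 0 with hx0
    have h1 : eval x0 (q k) = 1 := by
      rw [heval]
      have hm : (Matrix.of fun i j : Fin (r k) =>
          ∑ m : Fin M, x0 (Fin.castLE (hrT k) i, m) * U k m j) = 1 := by
        rw [← hU k]
        ext i j
        simp only [Matrix.of_apply, Matrix.mul_apply, Matrix.conjTranspose_apply]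
        refine Finset.sum_congr rfl fun m _ => ?_
        have hi : ((Fin.castLE (hrT k) i : Fin T) : ℕ) < r k := by
          simpa using i.isLt
        rw [hx0]
        simp only [dif_pos hi]
        congr 1
      rw [hm, Matrix.det_one]
    rw [h0] at h1
    simp at h1
  have hprod : (∏ k, q k) ≠ 0 := Finset.prod_ne_zero_iff.2 fun k _ => hqne k
  have hex : ∃ x : Fin T × Fin M → ℂ, eval x (∏ k, q k) ≠ 0 := by
    by_contra h
    push_neg at h
    exact hprod (MvPolynomial.funext fun x => by rw [map_zero]; exact h x)
  obtain ⟨x, hx⟩ := hex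
  rw [map_prod] at hx
  refine ⟨Matrix.of fun t m' => x (t, m'), fun k => ?_⟩
  have hdk : eval x (q k) ≠ 0 := Finset.prod_ne_zero_iff.1 hx k (Finset.mem_univ k)
  rw [heval] at hdk
  set P : Matrix (Fin T) (Fin M) ℂ := Matrix.of fun t m' => x (t, m') with hP
  set S : Matrix (Fin (r k)) (Fin (r k)) ℂ :=
    Matrix.of (fun i j : Fin (r k) => ∑ m : Fin M, x (Fin.castLE (hrT k) i, m) * U k m j)
    with hS
  have hSunit : IsUnit S := (Matrix.isUnit_iff_isUnit_det S).2 (Ne.isUnit hdk)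
  have hSinj := Matrix.mulVec_injective_iff_isUnit.2 hSunit
  have hcore : ∀ v : Fin (r k) → ℂ, (P * U k) *ᵥ v = 0 → v = 0 := by
    intro v hv
    have hSv : S *ᵥ v = 0 := by
      ext i
      have hrow := congrFun hv (Fin.castLE (hrT k) i)
      simp only [Matrix.mulVec, dotProduct, Matrix.mul_apply, Pi.zero_apply] at hrow ⊢
      rw [← hrow]
      refine Finset.sum_congr rfl fun j _ => ?_
      simp [hS, hP, Matrix.of_apply]
    have := hSinj (by rw [hSv, Matrix.mulVec_zero] : S *ᵥ v = S *ᵥ 0)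
    exact this
  intro a b hab
  have : (P * U k) *ᵥ (a - b) = 0 := by
    rw [Matrix.mulVec_sub, hab, sub_self]
  have := hcore _ this
  exact sub_eq_zero.1 this



/-- Proposition 1: the minimum pilot length for which the per-user error constraints
are feasible equals max_k r_k. -/
theorem stmt_15 (M K : ℕ) (r : Fin K → ℕ) (hrM : ∀ k, r k ≤ M)
    (U : (k : Fin K) → Matrix (Fin M) (Fin (r k)) ℂ)
    (hU : ∀ k, (U k)ᴴ * U k = 1)
    (d : (k : Fin K) → Fin (r k) → ℝ) (hd : ∀ k i, 0 < d k i)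
    (ε : Fin K → ℝ) (hε : ∀ k, 0 < ε k) (hdε : ∀ k i, ε k < d k i)
    (σ2 : Fin K → ℝ) (hσ : ∀ k, 0 < σ2 k)
    (Λ : (k : Fin K) → Matrix (Fin (r k)) (Fin (r k)) ℂ)
    (hΛ : ∀ k, Λ k = Matrix.diagonal (fun i => (d k i : ℂ))) :
    IsLeast { T : ℕ | ∃ P : Matrix (Fin T) (Fin M) ℂ,
        ∀ k, ((ε k : ℂ) • (1 : Matrix (Fin M) (Fin M) ℂ)
          - U k * ((Λ k)⁻¹ + ((σ2 k : ℂ))⁻¹ • ((U k)ᴴ * Pᴴ * P * U k))⁻¹ * (U k)ᴴ).PosSemidef }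
      (Finset.univ.sup r) := by
  classical
  constructor
  · -- membership: construct a feasible P with T = max r k
    set T := Finset.univ.sup r with hT
    have hrT : ∀ k, r k ≤ T := fun k => Finset.le_sup (Finset.mem_univ k)
    obtain ⟨P0, hP0⟩ := exists_goodP M K T r hrT U hU
    choose c hc hquad using fun k => gram_lower (P0 * U k) (hP0 k)
    have hterm_nonneg : ∀ k : Fin K, 0 ≤ σ2 k * (ε k)⁻¹ * (c k)⁻¹ := fun k => by
      have := hσ k; have := hε k; have := hc k; positivity
    set t : ℝ := Real.sqrt (1 + ∑ k, σ2 k * (ε k)⁻¹ * (c k)⁻¹) with ht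
    have hsum0 : (0:ℝ) ≤ 1 + ∑ k, σ2 k * (ε k)⁻¹ * (c k)⁻¹ := by
      have : (0:ℝ) ≤ ∑ k, σ2 k * (ε k)⁻¹ * (c k)⁻¹ :=
        Finset.sum_nonneg fun k _ => hterm_nonneg k
      linarith
    have ht2 : t ^ 2 = 1 + ∑ k, σ2 k * (ε k)⁻¹ * (c k)⁻¹ := Real.sq_sqrt hsum0
    refine ⟨(t : ℂ) • P0, fun k => ?_⟩
    rw [hΛ k, diag_inv (d k) (hd k)]
    set P : Matrix (Fin T) (Fin M) ℂ := (t : ℂ) • P0 with hP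
    refine feasible_block (U k) (hU k) (B_posdef (U k) P (d k) (hd k) (hσ k)) (hε k)
      fun x => ?_
    have hA2 : (U k)ᴴ * Pᴴ * P * U k = (P * U k)ᴴ * (P * U k) := by
      rw [conjTranspose_mul, Matrix.mul_assoc]
    have hQF : (star x ⬝ᵥ (((Matrix.diagonal fun i => ((d k i : ℂ))⁻¹)
          + ((σ2 k : ℂ))⁻¹ • ((U k)ᴴ * Pᴴ * P * U k)) *ᵥ x)).re
        = (star x ⬝ᵥ ((Matrix.diagonal fun i => ((d k i : ℂ))⁻¹) *ᵥ x)).re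
          + (σ2 k)⁻¹ * (star ((P * U k) *ᵥ x) ⬝ᵥ ((P * U k) *ᵥ x)).re := by
      rw [add_mulVec, dotProduct_add, Complex.add_re, smul_mulVec, dotProduct_smul,
        smul_eq_mul, ← Complex.ofReal_inv, Complex.re_ofReal_mul, hA2, quad_gram]
    have hY : (P * U k) *ᵥ x = (t : ℂ) • ((P0 * U k) *ᵥ x) := by
      rw [hP, Matrix.smul_mul, smul_mulVec]
    have hYre : (star ((P * U k) *ᵥ x) ⬝ᵥ ((P * U k) *ᵥ x)).re
        = t ^ 2 * (star ((P0 * U k) *ᵥ x) ⬝ᵥ ((P0 * U k) *ᵥ x)).re := by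
      rw [hY, star_smul, smul_dotProduct, dotProduct_smul, Complex.star_def,
        Complex.conj_ofReal, smul_eq_mul, smul_eq_mul, ← mul_assoc, ← Complex.ofReal_mul,
        Complex.re_ofReal_mul]
      ring
    have hD0 : 0 ≤ (star x ⬝ᵥ ((Matrix.diagonal fun i => ((d k i : ℂ))⁻¹) *ᵥ x)).re :=
      (Complex.le_def.1 ((diag_posdef (d k) (hd k)).posSemidef.dotProduct_mulVec_nonneg x)).1
    have h1 : σ2 k * (ε k)⁻¹ * (c k)⁻¹ ≤ t ^ 2 := by
      rw [ht2]
      have := Finset.single_le_sum (f := fun k => σ2 k * (ε k)⁻¹ * (c k)⁻¹)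
        (fun k _ => hterm_nonneg k) (Finset.mem_univ k)
      linarith
    have h2 : (ε k)⁻¹ ≤ (σ2 k)⁻¹ * t ^ 2 * c k := by
      have h3 := mul_le_mul_of_nonneg_left h1
        (show (0:ℝ) ≤ (σ2 k)⁻¹ * c k by have := hσ k; have := hc k; positivity)
      calc (ε k)⁻¹ = ((σ2 k)⁻¹ * c k) * (σ2 k * (ε k)⁻¹ * (c k)⁻¹) := by
            rw [show ((σ2 k)⁻¹ * c k) * (σ2 k * (ε k)⁻¹ * (c k)⁻¹)
                = ((σ2 k)⁻¹ * σ2 k) * (c k * (c k)⁻¹) * (ε k)⁻¹ from by ring,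
              inv_mul_cancel₀ (hσ k).ne', mul_inv_cancel₀ (hc k).ne', one_mul, one_mul]
          _ ≤ ((σ2 k)⁻¹ * c k) * t ^ 2 := h3
          _ = (σ2 k)⁻¹ * t ^ 2 * c k := by ring
    have hgram := hquad k x
    have hc1 : (ε k)⁻¹ * (star x ⬝ᵥ x).re ≤ ((σ2 k)⁻¹ * t ^ 2 * c k) * (star x ⬝ᵥ x).re :=
      mul_le_mul_of_nonneg_right h2 (re_nonneg_dp x)
    have hc3 : (σ2 k)⁻¹ * (t ^ 2 * (c k * (star x ⬝ᵥ x).re))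
        ≤ (σ2 k)⁻¹ * (t ^ 2 * (star ((P0 * U k) *ᵥ x) ⬝ᵥ ((P0 * U k) *ᵥ x)).re) := by
      apply mul_le_mul_of_nonneg_left _ (by have := hσ k; positivity)
      exact mul_le_mul_of_nonneg_left hgram (sq_nonneg t)
    rw [hQF, hYre]
    calc (ε k)⁻¹ * (star x ⬝ᵥ x).re
        ≤ ((σ2 k)⁻¹ * t ^ 2 * c k) * (star x ⬝ᵥ x).re := hc1
      _ = (σ2 k)⁻¹ * (t ^ 2 * (c k * (star x ⬝ᵥ x).re)) := by ring
      _ ≤ (σ2 k)⁻¹ * (t ^ 2 * (star ((P0 * U k) *ᵥ x) ⬝ᵥ ((P0 * U k) *ᵥ x)).re) := hc3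
      _ = 0 + (σ2 k)⁻¹ * (t ^ 2 * (star ((P0 * U k) *ᵥ x) ⬝ᵥ ((P0 * U k) *ᵥ x)).re) := by
            ring
      _ ≤ (star x ⬝ᵥ ((Matrix.diagonal fun i => ((d k i : ℂ))⁻¹) *ᵥ x)).re
          + (σ2 k)⁻¹ * (t ^ 2 * (star ((P0 * U k) *ᵥ x) ⬝ᵥ ((P0 * U k) *ᵥ x)).re) := by
            linarith
  · -- lower bound
    rintro T ⟨P, hPfeas⟩
    refine Finset.sup_le fun k _ => ?_
    by_contra hlt
    push_neg at hlt
    obtain ⟨v, hv0, hker⟩ := exists_ker (P * U k) hlt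
    have hblock := lower_block (U k) (hU k) P (d k) (hd k) (hε k) (hdε k) (hσ k) v hv0 hker
    have h := hPfeas k
    rw [hΛ k] at h
    exact hblock h
end

section
/- Let Λ be an r×r diagonal positive definite matrix with diagonal entries λ₁ ≥ … ≥ λ_r > 0, σ² > 0, ε > 0, U an M×r matrix with orthonormal columns, and P a T×M matrix with C_e(P) ⪯ ε I_M, where C_e(P) = U(Λ⁻¹ + σ⁻² UᴴPᴴPU)⁻¹Uᴴ. Then T ≥ #{i : λ_i > ε}. -/
open Matrix ComplexOrder

/-- Single-user Corollary 1: if C_e(P) ⪯ ε I, the pilot length T is at least the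
number of eigenvalues of Λ exceeding ε. -/
theorem stmt_18 (M T r : ℕ) (d : Fin r → ℝ) (hd : ∀ i, 0 < d i)
    (hdec : Antitone d)
    (U : Matrix (Fin M) (Fin r) ℂ) (hU : Uᴴ * U = 1)
    (P : Matrix (Fin T) (Fin M) ℂ) (σ2 ε : ℝ) (hσ : 0 < σ2) (hε : 0 < ε)
    (Λ : Matrix (Fin r) (Fin r) ℂ) (hΛ : Λ = Matrix.diagonal (fun i => (d i : ℂ)))
    (hCe : ((ε : ℂ) • (1 : Matrix (Fin M) (Fin M) ℂ)
      - U * (Λ⁻¹ + ((σ2 : ℂ))⁻¹ • (Uᴴ * Pᴴ * P * U))⁻¹ * Uᴴ).PosSemidef) :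
    (Finset.univ.filter fun i => ε < d i).card ≤ T := by
  set B : Matrix (Fin r) (Fin r) ℂ := Uᴴ * Pᴴ * P * U with hB
  set A : Matrix (Fin r) (Fin r) ℂ := Λ⁻¹ + ((σ2 : ℂ))⁻¹ • B with hA
  have hΛinv : Λ⁻¹ = Matrix.diagonal (fun i => ((d i : ℂ))⁻¹) := by
    apply Matrix.inv_eq_right_inv
    rw [hΛ, Matrix.diagonal_mul_diagonal]
    rw [show (fun i => (d i : ℂ) * ((d i : ℂ))⁻¹) = fun _ => (1 : ℂ) from
      funext fun i => mul_inv_cancel₀ (by exact_mod_cast (hd i).ne')]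
    exact Matrix.diagonal_one
  have hΛpd : (Λ⁻¹).PosDef := by
    rw [hΛinv]
    exact Matrix.posDef_diagonal_iff.mpr fun i => by
      rw [← Complex.ofReal_inv]
      exact Complex.zero_lt_real.mpr (inv_pos.mpr (hd i))
  have hBeq : B = (P * U)ᴴ * (P * U) := by
    rw [hB]; simp [Matrix.conjTranspose_mul, Matrix.mul_assoc]
  have hBpsd : B.PosSemidef := by
    rw [hBeq]; exact Matrix.posSemidef_conjTranspose_mul_self (P * U)
  have hσc : (0 : ℂ) ≤ ((σ2 : ℂ))⁻¹ := by
    rw [← Complex.ofReal_inv]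
    exact Complex.zero_le_real.mpr (by positivity)
  have hsmul : (((σ2 : ℂ))⁻¹ • B).PosSemidef := by
    refine posSemidef_iff_dotProduct_mulVec.mpr ⟨?_, ?_⟩
    · show (((σ2 : ℂ))⁻¹ • B)ᴴ = _
      rw [Matrix.conjTranspose_smul, hBpsd.1.eq]
      congr 1
      simp
    · intro x
      rw [Matrix.smul_mulVec, dotProduct_smul]
      exact smul_nonneg hσc (hBpsd.dotProduct_mulVec_nonneg x)
  have hApd : A.PosDef := hΛpd.add_posSemidef hsmul
  have hM : (((ε : ℂ)) • (1 : Matrix (Fin r) (Fin r) ℂ) - A⁻¹).PosSemidef := by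
    have h := hCe.conjTranspose_mul_mul_same U
    have e : Uᴴ * ((ε : ℂ) • 1 - U * A⁻¹ * Uᴴ) * U
        = (ε : ℂ) • 1 - A⁻¹ := by
      rw [Matrix.mul_sub, Matrix.sub_mul]
      congr 1
      · rw [Matrix.mul_smul, Matrix.mul_one, Matrix.smul_mul, hU]
      · simp only [← Matrix.mul_assoc]
        rw [hU, Matrix.one_mul, Matrix.mul_assoc, hU, Matrix.mul_one]
    rwa [e] at h
  -- core vanishing lemma
  have key : ∀ x : Fin r → ℂ, (P * U) *ᵥ x = 0 → (∀ j, ¬ ε < d j → x j = 0) → x = 0 := by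
    intro x hPUx hsupp
    have hBx : B *ᵥ x = 0 := by
      rw [hBeq, ← Matrix.mulVec_mulVec, hPUx, Matrix.mulVec_zero]
    have hwdef : Λ⁻¹ *ᵥ x = fun i => ((d i : ℂ))⁻¹ * x i := by
      funext i; rw [hΛinv]; exact Matrix.mulVec_diagonal _ _ _
    set w : Fin r → ℂ := fun i => ((d i : ℂ))⁻¹ * x i with hw
    have hwi : ∀ i, w i = ((d i : ℂ))⁻¹ * x i := fun i => rfl
    have hAx : A *ᵥ x = w := by
      rw [hA, Matrix.add_mulVec, Matrix.smul_mulVec, hBx, smul_zero, add_zero]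
      exact hwdef
    have hAinv : A⁻¹ *ᵥ w = x := by
      rw [← hAx, Matrix.mulVec_mulVec,
        Matrix.nonsing_inv_mul A ((Matrix.isUnit_iff_isUnit_det A).mp hApd.isUnit),
        Matrix.one_mulVec]
    have hq := hM.dotProduct_mulVec_nonneg w
    set t : Fin r → ℝ :=
      fun i => ((d i)⁻¹ * ((d i)⁻¹ * ε - 1)) * Complex.normSq (x i) with ht
    have hsum : star w ⬝ᵥ ((((ε : ℂ)) • 1 - A⁻¹) *ᵥ w) = ((∑ i, t i : ℝ) : ℂ) := by
      rw [Matrix.sub_mulVec, Matrix.smul_mulVec, Matrix.one_mulVec, hAinv]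
      simp only [dotProduct, Pi.sub_apply, Pi.smul_apply, Pi.star_apply,
        smul_eq_mul]
      push_cast
      refine Finset.sum_congr rfl fun i _ => ?_
      rw [hwi i, ht]
      simp only [star_mul', star_inv₀, Complex.star_def, Complex.conj_ofReal]
      push_cast
      rw [Complex.normSq_eq_conj_mul_self]
      ring
    rw [hsum] at hq
    have hreal : (0 : ℝ) ≤ ∑ i, t i := Complex.zero_le_real.mp hq
    have hnonpos : ∀ i ∈ Finset.univ, t i ≤ (0 : ℝ) := by
      intro i _
      by_cases hxi : x i = 0
      · simp [ht, hxi]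
      · have hdi : ε < d i := by by_contra h; exact hxi (hsupp i h)
        have h2 : (d i)⁻¹ * ε < 1 := by
          rw [inv_mul_eq_div]; exact (div_lt_one (hd i)).mpr hdi
        have h3 : (0 : ℝ) < (d i)⁻¹ := inv_pos.mpr (hd i)
        have h4 : (0 : ℝ) ≤ Complex.normSq (x i) := Complex.normSq_nonneg _
        have hc : (d i)⁻¹ * ((d i)⁻¹ * ε - 1) < 0 :=
          mul_neg_of_pos_of_neg h3 (by linarith)
        exact mul_nonpos_iff.mpr (Or.inr ⟨hc.le, h4⟩)
    have hzero : ∀ i ∈ Finset.univ, t i = 0 :=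
      (Finset.sum_eq_zero_iff_of_nonpos hnonpos).mp
        (le_antisymm (Finset.sum_nonpos hnonpos) hreal)
    funext j
    show x j = 0
    by_contra hxj
    have hdj : ε < d j := by by_contra h; exact hxj (hsupp j h)
    have h2 : (d j)⁻¹ * ε < 1 := by
      rw [inv_mul_eq_div]; exact (div_lt_one (hd j)).mpr hdj
    have h3 : (0 : ℝ) < (d j)⁻¹ := inv_pos.mpr (hd j)
    have h4 : (0 : ℝ) < Complex.normSq (x j) := Complex.normSq_pos.mpr hxj
    have hc : (d j)⁻¹ * ((d j)⁻¹ * ε - 1) < 0 :=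
      mul_neg_of_pos_of_neg h3 (by linarith)
    have hlt : t j < 0 := mul_neg_of_neg_of_pos hc h4
    exact absurd (hzero j (Finset.mem_univ j)) (ne_of_lt hlt)
  -- linear independence of the columns indexed by big eigenvalues
  set s : {i : Fin r // ε < d i} → Fin r → ℂ :=
    fun i => Pi.single (i : Fin r) (1 : ℂ) with hsdef
  have hli : LinearIndependent ℂ
      (fun i : {i : Fin r // ε < d i} => (P * U) *ᵥ s i) := by
    rw [Fintype.linearIndependent_iff]
    intro g hg i
    set x : Fin r → ℂ := ∑ i : {i : Fin r // ε < d i}, g i • s i with hx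
    have hPUx : (P * U) *ᵥ x = 0 := by
      have h1 : (P * U).mulVecLin x
          = ∑ i : {i : Fin r // ε < d i}, g i • (P * U).mulVecLin (s i) := by
        rw [hx, map_sum]
        exact Finset.sum_congr rfl fun i _ => _root_.map_smul _ _ _
      simp only [Matrix.mulVecLin_apply] at h1
      rw [h1]
      exact hg
    have hs : ∀ j, ¬ ε < d j → x j = 0 := by
      intro j hj
      rw [hx, Finset.sum_apply]
      refine Finset.sum_eq_zero fun i _ => ?_
      have hne : j ≠ (i : Fin r) := fun h => hj (h ▸ i.2)
      simp [hsdef, Pi.single_apply, hne]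
    have hx0 := key x hPUx hs
    have hgi : x (i : Fin r) = g i := by
      rw [hx, Finset.sum_apply]
      rw [Finset.sum_eq_single i]
      · simp [hsdef]
      · intro b _ hb
        have hne : (i : Fin r) ≠ (b : Fin r) := fun h => hb (Subtype.ext h.symm)
        simp [hsdef, Pi.single_apply, hne]
      · intro h; exact absurd (Finset.mem_univ i) h
    rw [← hgi, hx0]
    simp
  have hcard := hli.fintype_card_le_finrank
  rw [Module.finrank_pi ℂ, Fintype.card_fin] at hcard
  rwa [Fintype.card_subtype] at hcard
end
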